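/- Every type is strongly isomorphic to its normal form: σ ≈ₛ nf(σ), where nf(σ) is the (unique up to commutativity/associativity) normal form of σ with respect to the top normalisation rules. -/

import Mathlib

namespace TypeIso

open Relation

/-- Untyped λ-terms with named variables. -/
inductive Term : Type
  | var : ℕ → Term
  | app : Term → Term → Term
  | lam : ℕ → Term → Term
deriving DecidableEq

namespace Term

/-- Free variables. -/
def fv : Term → Finset ℕ
  | var x => {x}
  | app M N => fv M ∪ fv N
  | lam x M => fv M \ {x}

/-- Substitution `M[N/x]` (naive; adequate for the linear terms considered). -/
def subst : Term → ℕ → Term → Term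
  | var y, x, N => if y = x then N else var y
  | app M₁ M₂, x, N => app (subst M₁ x N) (subst M₂ x N)
  | lam y M, x, N => if y = x then lam y M else lam y (subst M x N)

end Term

open Term

/-- One-step β-reduction. -/
inductive Beta : Term → Term → Prop
  | beta (x M N) : Beta (Term.app (Term.lam x M) N) (Term.subst M x N)
  | appL {M M'} (N) : Beta M M' → Beta (Term.app M N) (Term.app M' N)
  | appR (M) {N N'} : Beta N N' → Beta (Term.app M N) (Term.app M N')
  | lam (x) {M M'} : Beta M M' → Beta (Term.lam x M) (Term.lam x M')

/-- One-step η-reduction. -/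
inductive Eta : Term → Term → Prop
  | eta (x M) : x ∉ fv M → Eta (Term.lam x (Term.app M (Term.var x))) M
  | appL {M M'} (N) : Eta M M' → Eta (Term.app M N) (Term.app M' N)
  | appR (M) {N N'} : Eta N N' → Eta (Term.app M N) (Term.app M N')
  | lam (x) {M M'} : Eta M M' → Eta (Term.lam x M) (Term.lam x M')

def BetaStar : Term → Term → Prop := ReflTransGen Beta
def EtaStar : Term → Term → Prop := ReflTransGen Eta
/-- η-expansion: the converse of one-step η-reduction. -/
def EtaExp : Term → Term → Prop := fun a b => Eta b a
def EtaExpStar : Term → Term → Prop := ReflTransGen EtaExp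
def BetaConv : Term → Term → Prop := EqvGen Beta
def BetaEta : Term → Term → Prop := fun a b => Beta a b ∨ Eta a b
def BetaEtaConv : Term → Term → Prop := EqvGen BetaEta

def BetaEtaRed : Term → Term → Prop := ReflTransGen BetaEta

/-- `appList h [a₁,…,aₙ] = h a₁ … aₙ`. -/
def appList (h : Term) (args : List Term) : Term := args.foldl Term.app h
/-- `lamList [y₁,…,yₙ] M = λ y₁ … yₙ. M`. -/
def lamList (xs : List ℕ) (body : Term) : Term := xs.foldr Term.lam body

/-- β-normal finite hereditary permutators:
`λ x y₁ … yₙ. x (P₁ y_{π(1)}) … (Pₙ y_{π(n)})` with each `Pᵢ` an FHP. -/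
inductive FHPnf : Term → Prop
  | mk (x : ℕ) (ys : List ℕ) (Ps : List Term) (π : Equiv.Perm (Fin ys.length))
      (hlen : Ps.length = ys.length)
      (hx : x ∉ ys) (hnd : ys.Nodup)
      (hPs : ∀ P ∈ Ps, FHPnf P) :
      FHPnf (Term.lam x (lamList ys (appList (Term.var x)
        (List.ofFn fun i : Fin ys.length =>
          Term.app (Ps.get (Fin.cast hlen.symm i)) (Term.var (ys.get (π i)))))))

/-- Finite hereditary permutators (modulo β-conversion). -/
def FHP (M : Term) : Prop := ∃ N, BetaConv M N ∧ FHPnf N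

/-- β-normal finite hereditary identities:
`λ x y₁ … yₙ. x (Id₁ y₁) … (Idₙ yₙ)` with each `Idᵢ` an FHI. -/
inductive FHInf : Term → Prop
  | mk (x : ℕ) (ys : List ℕ) (Ids : List Term)
      (hlen : Ids.length = ys.length)
      (hx : x ∉ ys) (hnd : ys.Nodup)
      (hIds : ∀ P ∈ Ids, FHInf P) :
      FHInf (Term.lam x (lamList ys (appList (Term.var x)
        (List.ofFn fun i : Fin ys.length =>
          Term.app (Ids.get (Fin.cast hlen.symm i)) (Term.var (ys.get i))))))

/-- Finite hereditary identities (modulo β-conversion). -/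
def FHI (M : Term) : Prop := ∃ N, BetaConv M N ∧ FHInf N

/-- Types with atoms, ω, arrow, intersection and union. -/
inductive Ty : Type
  | atom : ℕ → Ty
  | omega : Ty
  | arr : Ty → Ty → Ty
  | and : Ty → Ty → Ty
  | or : Ty → Ty → Ty
deriving DecidableEq

/-- Semantic type equivalence `≅`: the least congruence with
`φ ≅ ω→φ`, `ω ≅ ω→ω`, `σ ≅ σ∧ω ≅ ω∧σ`, `ω ≅ σ∨ω ≅ ω∨σ`. -/
inductive SemEq : Ty → Ty → Prop
  | refl (σ) : SemEq σ σ
  | symm : SemEq σ τ → SemEq τ σ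
  | trans : SemEq σ τ → SemEq τ ρ → SemEq σ ρ
  | arr : SemEq σ σ' → SemEq τ τ' → SemEq (Ty.arr σ τ) (Ty.arr σ' τ')
  | and : SemEq σ σ' → SemEq τ τ' → SemEq (Ty.and σ τ) (Ty.and σ' τ')
  | or : SemEq σ σ' → SemEq τ τ' → SemEq (Ty.or σ τ) (Ty.or σ' τ')
  | atomFun (a) : SemEq (Ty.atom a) (Ty.arr Ty.omega (Ty.atom a))
  | omegaFun : SemEq Ty.omega (Ty.arr Ty.omega Ty.omega)
  | andOmegaR (σ) : SemEq σ (Ty.and σ Ty.omega)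
  | andOmegaL (σ) : SemEq σ (Ty.and Ty.omega σ)
  | orOmegaR (σ) : SemEq Ty.omega (Ty.or σ Ty.omega)
  | orOmegaL (σ) : SemEq Ty.omega (Ty.or Ty.omega σ)

/-- Relevant environments, considered up to permutation in the rules. -/
abbrev Env := List (ℕ × Ty)

def Env.dom (Γ : Env) : List ℕ := Γ.map Prod.fst

def EnvDisj (Γ₁ Γ₂ : Env) : Prop := ∀ x, x ∈ Γ₁.dom → x ∉ Γ₂.dom

/-- The intersection-union type assignment system for linear λ-terms (Figure 1). -/
inductive Deriv : Env → Term → Ty → Prop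
  | ax (x σ) : Deriv [(x, σ)] (Term.var x) σ
  | eqv {Γ M σ τ} : Deriv Γ M σ → SemEq σ τ → Deriv Γ M τ
  | perm {Γ Γ' M σ} : Deriv Γ M σ → Γ.Perm Γ' → Deriv Γ' M σ
  | arrI {Γ x σ M τ} : Deriv ((x, σ) :: Γ) M τ → Deriv Γ (Term.lam x M) (Ty.arr σ τ)
  | arrE {Γ₁ Γ₂ M N σ τ} : Deriv Γ₁ M (Ty.arr σ τ) → Deriv Γ₂ N σ → EnvDisj Γ₁ Γ₂ →
      Deriv (Γ₁ ++ Γ₂) (Term.app M N) τ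
  | andI {Γ M σ τ} : Deriv Γ M σ → Deriv Γ M τ → Deriv Γ M (Ty.and σ τ)
  | andE₁ {Γ M σ τ} : Deriv Γ M (Ty.and σ τ) → Deriv Γ M σ
  | andE₂ {Γ M σ τ} : Deriv Γ M (Ty.and σ τ) → Deriv Γ M τ
  | orI₁ {Γ M σ τ} : Deriv Γ M σ → Deriv Γ M (Ty.or σ τ)
  | orI₂ {Γ M σ τ} : Deriv Γ M σ → Deriv Γ M (Ty.or τ σ)
  | orE {Γ₁ Γ₂ x M N σ τ ζ ρ} :
      Deriv ((x, Ty.and σ ζ) :: Γ₁) M ρ →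
      Deriv ((x, Ty.and τ ζ) :: Γ₁) M ρ →
      Deriv Γ₂ N (Ty.and (Ty.or σ τ) ζ) → EnvDisj Γ₁ Γ₂ →
      Deriv (Γ₁ ++ Γ₂) (Term.subst M x N) ρ

/-- Linear λ-terms: every free or bound variable occurs exactly once. -/
inductive Linear : Term → Prop
  | var (x) : Linear (Term.var x)
  | app {M N} : Linear M → Linear N → Disjoint (fv M) (fv N) → Linear (Term.app M N)
  | lam {x M} : Linear M → x ∈ fv M → Linear (Term.lam x M)

/-- A variable fresh for a finite set. -/
def freshVar (s : Finset ℕ) : ℕ := (s.sup id) + 1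

/-- Composition `λx. P (Q x)` with a fresh `x`. -/
def tcomp (P Q : Term) : Term :=
  Term.lam (freshVar (fv P ∪ fv Q))
    (Term.app P (Term.app Q (Term.var (freshVar (fv P ∪ fv Q)))))

/-- `P` and `Q` are inverse of each other: both compositions are βη-equal to the identity. -/
def InvPair (P Q : Term) : Prop :=
  ∃ x, BetaEtaConv (tcomp P Q) (Term.lam x (Term.var x)) ∧
       BetaEtaConv (tcomp Q P) (Term.lam x (Term.var x))

/-- Type isomorphism `σ ≈ τ`. -/
def TyIso (σ τ : Ty) : Prop :=
  ∃ P Q, FHP P ∧ FHP Q ∧ InvPair P Q ∧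
    Deriv [] P (Ty.arr σ τ) ∧ Deriv [] Q (Ty.arr τ σ)

/-- Strong type isomorphism `σ ≈ₛ τ`: proved by a finite hereditary identity. -/
def StrongIso (σ τ : Ty) : Prop :=
  ∃ Id, FHI Id ∧ Deriv [] Id (Ty.arr σ τ) ∧ Deriv [] Id (Ty.arr τ σ)

/-- The normalisation pre-order `≤` on types. -/
inductive NormLe : Ty → Ty → Prop
  | refl (σ) : NormLe σ σ
  | trans {σ τ ρ} : NormLe σ τ → NormLe τ ρ → NormLe σ ρ
  | leOmega (σ) : NormLe σ Ty.omega
  | andE₁ (σ τ) : NormLe (Ty.and σ τ) σ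
  | andE₂ (σ τ) : NormLe (Ty.and σ τ) τ
  | orI₁ (σ τ) : NormLe σ (Ty.or σ τ)
  | orI₂ (σ τ) : NormLe τ (Ty.or σ τ)
  | andI {σ τ ρ} : NormLe σ τ → NormLe σ ρ → NormLe σ (Ty.and τ ρ)
  | orE {σ τ ρ} : NormLe σ τ → NormLe ρ τ → NormLe (Ty.or σ ρ) τ
  | atomArr (a σ) : NormLe (Ty.atom a) (Ty.arr σ (Ty.atom a))
  | omegaArr (σ) : NormLe Ty.omega (Ty.arr σ Ty.omega)
  | arr {σ σ' τ τ'} : NormLe σ' σ → NormLe τ τ' → NormLe (Ty.arr σ τ) (Ty.arr σ' τ')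

/-- Inner type normalisation rules `σ ⇝ τ`. -/
inductive InnerStep : Ty → Ty → Prop
  | atomRule (a) : InnerStep (Ty.arr Ty.omega (Ty.atom a)) (Ty.atom a)
  | omegaRule {σ} : NormLe Ty.omega σ → σ ≠ Ty.omega → InnerStep σ Ty.omega
  | distArrAnd (σ τ ρ) :
      InnerStep (Ty.arr σ (Ty.and τ ρ)) (Ty.and (Ty.arr σ τ) (Ty.arr σ ρ))
  | distAndArr (σ τ ρ ζ) :
      InnerStep (Ty.arr (Ty.and (Ty.or σ τ) ρ) ζ)
                (Ty.arr (Ty.or (Ty.and σ ρ) (Ty.and τ ρ)) ζ)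
  | distOrArr (σ τ ρ) :
      InnerStep (Ty.arr (Ty.or σ τ) ρ) (Ty.and (Ty.arr σ ρ) (Ty.arr τ ρ))
  | distArrOr (σ τ ρ ζ) :
      InnerStep (Ty.arr σ (Ty.or (Ty.and τ ρ) ζ))
                (Ty.arr σ (Ty.and (Ty.or τ ζ) (Ty.or ρ ζ)))
  | eraseAnd {σ τ} : NormLe σ τ → InnerStep (Ty.and σ τ) σ
  | eraseOr {σ τ} : NormLe σ τ → InnerStep (Ty.or σ τ) τ

/-- Type contexts. -/
inductive TyCtx : Type
  | hole : TyCtx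
  | arrL : TyCtx → Ty → TyCtx
  | arrR : Ty → TyCtx → TyCtx
  | andL : TyCtx → Ty → TyCtx
  | andR : Ty → TyCtx → TyCtx
  | orL : TyCtx → Ty → TyCtx
  | orR : Ty → TyCtx → TyCtx

/-- Filling the hole of a type context. -/
def TyCtx.fill : TyCtx → Ty → Ty
  | TyCtx.hole, τ => τ
  | TyCtx.arrL C σ, τ => Ty.arr (C.fill τ) σ
  | TyCtx.arrR σ C, τ => Ty.arr σ (C.fill τ)
  | TyCtx.andL C σ, τ => Ty.and (C.fill τ) σ
  | TyCtx.andR σ C, τ => Ty.and σ (C.fill τ)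
  | TyCtx.orL C σ, τ => Ty.or (C.fill τ) σ
  | TyCtx.orR σ C, τ => Ty.or σ (C.fill τ)

/-- Top normalisation rules `σ ⟹ τ`: contextual closure of the inner rules,
plus `(σ∧τ)∨ρ ⟹ (σ∨ρ)∧(τ∨ρ)` at the top or in right-hand sides of arrows. -/
inductive TopStep : Ty → Ty → Prop
  | ctx {σ τ} (C : TyCtx) : InnerStep σ τ → TopStep (C.fill σ) (C.fill τ)
  | dist (σ τ ρ) :
      TopStep (Ty.or (Ty.and σ τ) ρ) (Ty.and (Ty.or σ ρ) (Ty.or τ ρ))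
  | arrR {τ τ'} (σ) : TopStep τ τ' → TopStep (Ty.arr σ τ) (Ty.arr σ τ')

open Classical in
/-- The normal form of a type w.r.t. the top normalisation rules. -/
noncomputable def nf (σ : Ty) : Ty :=
  if h : ∃ ν, Relation.ReflTransGen TopStep σ ν ∧ ∀ ρ, ¬ TopStep ν ρ then h.choose else σ

/-- `mkArrow [ξ₁,…,ξₙ] μ = ξ₁ → … → ξₙ → μ`. -/
def mkArrow (args : List Ty) (res : Ty) : Ty := args.foldr Ty.arr res

/-- Similarity between sequences of normal types. -/
inductive TySim : List Ty → List Ty → Prop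
  | refl (l) : TySim l l
  | symm {l r} : TySim l r → TySim r l
  | trans {l r s} : TySim l r → TySim r s → TySim l s
  | mergeAnd (l₁ l₂ r₁ r₂ : List Ty) (η₁ η₂ θ₁ θ₂ : Ty) :
      l₁.length = r₁.length →
      TySim (l₁ ++ η₁ :: η₂ :: l₂) (r₁ ++ θ₁ :: θ₂ :: r₂) →
      TySim (l₁ ++ nf (Ty.and η₁ η₂) :: l₂) (r₁ ++ nf (Ty.and θ₁ θ₂) :: r₂)
  | mergeOr (l₁ l₂ r₁ r₂ : List Ty) (η₁ η₂ θ₁ θ₂ : Ty) :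
      l₁.length = r₁.length →
      TySim (l₁ ++ η₁ :: η₂ :: l₂) (r₁ ++ θ₁ :: θ₂ :: r₂) →
      TySim (l₁ ++ nf (Ty.or η₁ η₂) :: l₂) (r₁ ++ nf (Ty.or θ₁ θ₂) :: r₂)
  | arrow (m n : ℕ) (ξ χ : Fin n → Fin m → Ty) (μ ν : Fin m → Ty)
      (π : Equiv.Perm (Fin n)) :
      (∀ i, TySim (List.ofFn (ξ i)) (List.ofFn (χ i))) →
      TySim (List.ofFn μ) (List.ofFn ν) →
      TySim (List.ofFn fun j => nf (mkArrow (List.ofFn fun i => ξ i j) (μ j)))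
            (List.ofFn fun j => nf (mkArrow (List.ofFn fun i => χ (π i) j) (ν j)))


/-!
Each top normalisation step `σ ⟹ τ` is witnessed by one term typable at both `σ → τ` and
`τ → σ`: a closed universal identity (typable at `ρ → ρ` for every `ρ`) that is β-convertible
to a β-normal finite hereditary identity. Three constructions produce such witnesses: the
identity `λz. z`, which realises every coercion derivable for a bare variable; the composite
`λx. C₂ (C₁ x)`, whose normal form is obtained by composing the argument FHIs pairwise; and the
arrow action `λx y. W (x (P y))`. Composition yields transitivity and the `∧`/`∨` congruences, the
arrow action the arrow congruence and the distribution of arrows over `∧` and `∨`; the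
remaining rules are identity coercions up to congruence, or, like the `ω`-rule and the erase
rules, a realiser of the normalisation pre-order `≤` composed with an identity coercion back.
-/

/-! ## Terms -/

namespace Term

def allVars : Term → Finset ℕ
  | var x => {x}
  | app M N => allVars M ∪ allVars N
  | lam x M => insert x (allVars M)

lemma subst_eq_self {M : Term} {x : ℕ} (N : Term) (h : x ∉ fv M) : M.subst x N = M := by
  induction M with
  | var y =>
      simp only [fv, Finset.mem_singleton] at h
      simp [subst, Ne.symm h]
  | app M₁ M₂ ih₁ ih₂ =>
      simp only [fv, Finset.mem_union, not_or] at h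
      simp [subst, ih₁ h.1, ih₂ h.2]
  | lam y M ih =>
      by_cases hyx : y = x
      · simp [subst, hyx]
      · have : x ∉ fv M := fun hx => h (by simp [fv, hx, Ne.symm hyx])
        simp [subst, hyx, ih this]

lemma subst_var_self : ∀ (M : Term) (x : ℕ), M.subst x (var x) = M
  | var y, x => by by_cases h : y = x <;> simp [subst, h]
  | app M N, x => by simp [subst, subst_var_self M x, subst_var_self N x]
  | lam y M, x => by by_cases h : y = x <;> simp [subst, h, subst_var_self M x]

@[simp] lemma subst_var_same (x : ℕ) (N : Term) : (var x).subst x N = N := by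
  simp [subst]

end Term

open Term

lemma freshVar_notMem (s : Finset ℕ) : freshVar s ∉ s := fun h => by
  have := Finset.le_sup (f := id) h
  simp only [freshVar, id] at this
  omega

@[simp] lemma lamList_nil (M : Term) : lamList [] M = M := rfl

@[simp] lemma lamList_cons (y : ℕ) (ys : List ℕ) (M : Term) :
    lamList (y :: ys) M = lam y (lamList ys M) := rfl

lemma lamList_append (ys zs : List ℕ) (M : Term) :
    lamList (ys ++ zs) M = lamList ys (lamList zs M) := by
  simp [lamList, List.foldr_append]

@[simp] lemma appList_nil (H : Term) : appList H [] = H := rfl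

@[simp] lemma appList_cons (H a : Term) (as : List Term) :
    appList H (a :: as) = appList (app H a) as := rfl

lemma appList_append (H : Term) (as bs : List Term) :
    appList H (as ++ bs) = appList (appList H as) bs := by
  simp [appList, List.foldl_append]

def zipAppVar (Ps : List Term) (ys : List ℕ) : List Term :=
  List.zipWith (fun P y => app P (var y)) Ps ys

@[simp] lemma zipAppVar_nil_left (ys : List ℕ) : zipAppVar [] ys = [] := rfl

@[simp] lemma zipAppVar_nil_right (Ps : List Term) : zipAppVar Ps [] = [] := by
  simp [zipAppVar]

@[simp] lemma zipAppVar_cons (P : Term) (Ps : List Term) (y : ℕ) (ys : List ℕ) :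
    zipAppVar (P :: Ps) (y :: ys) = app P (var y) :: zipAppVar Ps ys := rfl

@[simp] lemma length_zipAppVar (Ps : List Term) (ys : List ℕ) :
    (zipAppVar Ps ys).length = min Ps.length ys.length := by
  simp [zipAppVar]

lemma zipAppVar_append {Ps Qs : List Term} {ys zs : List ℕ} (h : Ps.length = ys.length) :
    zipAppVar (Ps ++ Qs) (ys ++ zs) = zipAppVar Ps ys ++ zipAppVar Qs zs := by
  simp [zipAppVar, List.zipWith_append h]

lemma zipAppVar_append_left : ∀ (Ps Qs : List Term) (ys : List ℕ),
    zipAppVar (Ps ++ Qs) ys = zipAppVar Ps ys ++ zipAppVar Qs (ys.drop Ps.length)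
  | [], _, _ => by simp
  | _ :: _, _, [] => by simp
  | P :: Ps, Qs, y :: ys => by simp [zipAppVar_append_left Ps Qs ys]

lemma drop_zipAppVar : ∀ (k : ℕ) (Ps : List Term) (ys : List ℕ),
    (zipAppVar Ps ys).drop k = zipAppVar (Ps.drop k) (ys.drop k)
  | 0, _, _ => by simp
  | _ + 1, [], _ => by simp
  | _ + 1, _ :: _, [] => by simp
  | k + 1, _ :: Ps, _ :: ys => by simp [drop_zipAppVar k Ps ys]

lemma mem_zipAppVar {t : Term} : ∀ {Ps : List Term} {ys : List ℕ}, t ∈ zipAppVar Ps ys →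
    ∃ P ∈ Ps, ∃ y ∈ ys, t = app P (var y)
  | [], _, h | _ :: _, [], h => by simp at h
  | P :: Ps, y :: ys, h => by
      rcases List.mem_cons.mp h with rfl | h
      · exact ⟨P, by simp, y, by simp, rfl⟩
      · obtain ⟨P', hP', y', hy', rfl⟩ := mem_zipAppVar h
        exact ⟨P', by simp [hP'], y', by simp [hy'], rfl⟩

lemma exists_mem_zipAppVar {P : Term} : ∀ {Ps : List Term} {ys : List ℕ},
    Ps.length = ys.length → P ∈ Ps → ∃ y, app P (var y) ∈ zipAppVar Ps ys
  | [], _, _, h => by simp at h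
  | _ :: _, [], hlen, _ => by simp at hlen
  | Q :: Ps, y :: ys, hlen, h => by
      rcases List.mem_cons.mp h with rfl | h
      · exact ⟨y, by simp⟩
      · obtain ⟨y', hy'⟩ := exists_mem_zipAppVar (by simpa using hlen) h
        exact ⟨y', by simp [hy']⟩

lemma ofFn_eq_zipAppVar (ys : List ℕ) (Ps : List Term) (hlen : Ps.length = ys.length) :
    (List.ofFn fun i : Fin ys.length =>
      app (Ps.get (Fin.cast hlen.symm i)) (var (ys.get i))) = zipAppVar Ps ys := by
  apply List.ext_getElem
  · simp [hlen]
  · intro i _ _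
    simp [zipAppVar, List.getElem_zipWith]

lemma subst_lamList {x : ℕ} {ys : List ℕ} (hx : x ∉ ys) (M N : Term) :
    (lamList ys M).subst x N = lamList ys (M.subst x N) := by
  induction ys with
  | nil => rfl
  | cons y ys ih =>
      simp only [List.mem_cons, not_or] at hx
      simp [subst, Ne.symm hx.1, ih hx.2]

lemma subst_appList (H : Term) (as : List Term) (x : ℕ) (N : Term) :
    (appList H as).subst x N = appList (H.subst x N) (as.map (·.subst x N)) := by
  induction as generalizing H with
  | nil => rfl
  | cons a as ih => simp [subst, ih]

lemma subst_zipAppVar {x : ℕ} {ys : List ℕ} {Ps : List Term} (hx : x ∉ ys)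
    (hPs : ∀ P ∈ Ps, fv P = ∅) (N : Term) :
    (zipAppVar Ps ys).map (·.subst x N) = zipAppVar Ps ys := by
  refine (List.map_congr_left fun t ht => ?_).trans (List.map_id _)
  obtain ⟨P, hP, y, hy, rfl⟩ := mem_zipAppVar ht
  simp [subst, subst_eq_self N (by simp [hPs P hP] : x ∉ fv P), ne_of_mem_of_not_mem hy hx]

lemma fv_lamList (ys : List ℕ) (M : Term) : fv (lamList ys M) = fv M \ ys.toFinset := by
  induction ys with
  | nil => simp
  | cons y ys ih =>
      ext a
      simp [fv, ih]
      tauto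

lemma mem_fv_appList {a : ℕ} (H : Term) (as : List Term) :
    a ∈ fv (appList H as) ↔ a ∈ fv H ∨ ∃ t ∈ as, a ∈ fv t := by
  induction as generalizing H with
  | nil => simp
  | cons b as ih => simp [ih, fv]; tauto

lemma mem_allVars_lamList {a : ℕ} (ys : List ℕ) (M : Term) :
    a ∈ allVars (lamList ys M) ↔ a ∈ ys ∨ a ∈ allVars M := by
  induction ys with
  | nil => simp
  | cons y ys ih => simp [allVars, ih]; tauto

lemma mem_allVars_appList {a : ℕ} (H : Term) (as : List Term) :
    a ∈ allVars (appList H as) ↔ a ∈ allVars H ∨ ∃ t ∈ as, a ∈ allVars t := by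
  induction as generalizing H with
  | nil => simp
  | cons b as ih => simp [ih, allVars]; tauto

/-! ## β-normal finite hereditary identities -/

def fhiTerm (x : ℕ) (ys : List ℕ) (Ps : List Term) : Term :=
  lam x (lamList ys (appList (var x) (zipAppVar Ps ys)))

lemma FHInf.mk_fhiTerm {x : ℕ} {ys : List ℕ} {Ps : List Term} (hlen : Ps.length = ys.length)
    (hx : x ∉ ys) (hnd : ys.Nodup) (hPs : ∀ P ∈ Ps, FHInf P) : FHInf (fhiTerm x ys Ps) := by
  have := FHInf.mk x ys Ps hlen hx hnd hPs
  rwa [ofFn_eq_zipAppVar ys Ps hlen] at this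

@[elab_as_elim]
lemma FHInf.induction_fhiTerm {motive : Term → Prop}
    (fhi : ∀ x ys Ps, Ps.length = ys.length → x ∉ ys → ys.Nodup → (∀ P ∈ Ps, FHInf P) →
      (∀ P ∈ Ps, motive P) → motive (fhiTerm x ys Ps))
    {t : Term} (ht : FHInf t) : motive t := by
  induction ht with
  | mk x ys Ps hlen hx hnd hPs ih =>
      have := fhi x ys Ps hlen hx hnd hPs ih
      rwa [fhiTerm, ← ofFn_eq_zipAppVar ys Ps hlen] at this

lemma FHInf.exists_eq_fhiTerm {t : Term} (h : FHInf t) :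
    ∃ x ys Ps, Ps.length = ys.length ∧ x ∉ ys ∧ ys.Nodup ∧ (∀ P ∈ Ps, FHInf P) ∧
      t = fhiTerm x ys Ps :=
  FHInf.induction_fhiTerm (fun x ys Ps hlen hx hnd hPs _ => ⟨x, ys, Ps, hlen, hx, hnd, hPs, rfl⟩) h

lemma fv_fhiTerm (x : ℕ) (ys : List ℕ) {Ps : List Term} (hPs : ∀ P ∈ Ps, fv P = ∅) :
    fv (fhiTerm x ys Ps) = ∅ := by
  ext a
  simp only [fhiTerm, fv, fv_lamList, Finset.mem_sdiff, mem_fv_appList, Finset.mem_singleton,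
    List.mem_toFinset, Finset.notMem_empty, iff_false, not_and, not_not]
  rintro ⟨rfl | ⟨t, ht, ha⟩, hys⟩
  · rfl
  · obtain ⟨P, hP, y, hy, rfl⟩ := mem_zipAppVar ht
    simp only [fv, hPs P hP, Finset.empty_union, Finset.mem_singleton] at ha
    exact absurd (ha ▸ hy) hys

lemma FHInf.fv_eq_empty {t : Term} (h : FHInf t) : fv t = ∅ :=
  FHInf.induction_fhiTerm (fun x ys _ _ _ _ _ ih => fv_fhiTerm x ys ih) h

lemma mem_allVars_fhiTerm {a x : ℕ} {ys : List ℕ} {Ps : List Term}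
    (hlen : Ps.length = ys.length) :
    a ∈ allVars (fhiTerm x ys Ps) ↔ a = x ∨ a ∈ ys ∨ ∃ P ∈ Ps, a ∈ allVars P := by
  simp only [fhiTerm, allVars, Finset.mem_insert, mem_allVars_lamList, mem_allVars_appList,
    Finset.mem_singleton]
  constructor
  · rintro (h | h | h | ⟨t, ht, ha⟩)
    · exact Or.inl h
    · exact Or.inr (Or.inl h)
    · exact Or.inl h
    · obtain ⟨P, hP, y, hy, rfl⟩ := mem_zipAppVar ht
      simp only [allVars, Finset.mem_union, Finset.mem_singleton] at ha
      rcases ha with ha | rfl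
      · exact Or.inr (Or.inr ⟨P, hP, ha⟩)
      · exact Or.inr (Or.inl hy)
  · rintro (h | h | ⟨P, hP, ha⟩)
    · exact Or.inl h
    · exact Or.inr (Or.inl h)
    · obtain ⟨y, hy⟩ := exists_mem_zipAppVar hlen hP
      exact Or.inr (Or.inr (Or.inr ⟨_, hy, by simp [allVars, ha]⟩))

lemma mem_allVars_fhiTerm_of_mem {x y : ℕ} {ys : List ℕ} {Ps : List Term} (hy : y ∈ ys) :
    y ∈ allVars (fhiTerm x ys Ps) := by
  simp [fhiTerm, allVars, mem_allVars_lamList, hy]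

lemma allVars_subset_allVars_fhiTerm {x : ℕ} {ys : List ℕ} {Ps : List Term} {P : Term}
    (hlen : Ps.length = ys.length) (hP : P ∈ Ps) : allVars P ⊆ allVars (fhiTerm x ys Ps) :=
  fun _ ha => (mem_allVars_fhiTerm hlen).mpr (Or.inr (Or.inr ⟨P, hP, ha⟩))

lemma allVars_fhiTerm_subset {S : Finset ℕ} {x : ℕ} {ys : List ℕ} {Ps : List Term}
    (hlen : Ps.length = ys.length) (hx : x ∈ S) (hys : ∀ y ∈ ys, y ∈ S)
    (hPs : ∀ P ∈ Ps, allVars P ⊆ S) : allVars (fhiTerm x ys Ps) ⊆ S := by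
  intro a ha
  rcases (mem_allVars_fhiTerm hlen).mp ha with rfl | h | ⟨P, hP, h⟩
  exacts [hx, hys a h, hPs P hP h]

namespace BetaConv

lemma rfl {M : Term} : BetaConv M M := EqvGen.refl M

lemma symm {M N : Term} (h : BetaConv M N) : BetaConv N M := EqvGen.symm _ _ h

lemma trans {M N P : Term} (h₁ : BetaConv M N) (h₂ : BetaConv N P) : BetaConv M P :=
  EqvGen.trans _ _ _ h₁ h₂

lemma map {f : Term → Term} (hf : ∀ {M M'}, Beta M M' → Beta (f M) (f M')) {M M' : Term}
    (h : BetaConv M M') : BetaConv (f M) (f M') := by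
  induction h with
  | rel _ _ h => exact EqvGen.rel _ _ (hf h)
  | refl => exact EqvGen.refl _
  | symm _ _ _ ih => exact EqvGen.symm _ _ ih
  | trans _ _ _ _ _ ih₁ ih₂ => exact EqvGen.trans _ _ _ ih₁ ih₂

lemma app {M M' N N' : Term} (h₁ : BetaConv M M') (h₂ : BetaConv N N') :
    BetaConv (app M N) (app M' N') :=
  (map (Beta.appL N) h₁).trans (map (Beta.appR M') h₂)

lemma lam (x : ℕ) {M M' : Term} (h : BetaConv M M') : BetaConv (lam x M) (lam x M') :=
  map (Beta.lam x) h

lemma lamList (ys : List ℕ) {M M' : Term} (h : BetaConv M M') :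
    BetaConv (lamList ys M) (lamList ys M') := by
  induction ys with
  | nil => exact h
  | cons y ys ih => exact lam y ih

lemma appList {H H' : Term} {as as' : List Term} (hH : BetaConv H H')
    (h : List.Forall₂ BetaConv as as') : BetaConv (appList H as) (appList H' as') := by
  induction h generalizing H H' with
  | nil => exact hH
  | cons ha _ ih => exact ih (app hH ha)

end BetaConv

lemma Beta.betaConv {M N : Term} (h : Beta M N) : BetaConv M N := EqvGen.rel _ _ h

lemma Beta.appList_left {M M' : Term} (as : List Term) (h : Beta M M') :
    Beta (appList M as) (appList M' as) := by
  induction as generalizing M M' with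
  | nil => exact h
  | cons a as ih => exact ih (Beta.appL a h)

lemma beta_fhiTerm_app {x : ℕ} {ys : List ℕ} {Ps : List Term} (hx : x ∉ ys)
    (hPs : ∀ P ∈ Ps, fv P = ∅) (N : Term) :
    Beta (app (fhiTerm x ys Ps) N) (lamList ys (appList N (zipAppVar Ps ys))) := by
  simpa [fhiTerm, subst_lamList hx, subst_appList, subst_zipAppVar hx hPs]
    using Beta.beta x (lamList ys (appList (var x) (zipAppVar Ps ys))) N

lemma betaConv_appList_lamList :
    ∀ (us : List ℕ) (Ps : List Term) (H : Term) (as : List Term),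
    Ps.length = us.length → us.Nodup → (∀ P ∈ Ps, fv P = ∅) → (∀ u ∈ us, u ∉ fv H) →
    (∀ u ∈ us, ∀ a ∈ as, u ∉ fv a) →
    BetaConv (appList (lamList us (appList H (zipAppVar Ps us))) as)
      (lamList (us.drop as.length) (appList H
        (List.zipWith Term.app Ps as ++ zipAppVar (Ps.drop as.length) (us.drop as.length)
          ++ as.drop us.length)))
  | [], Ps, H, as, hlen, _, _, _, _ => by
      rw [List.length_eq_zero_iff.mp hlen]
      simpa [← appList_append] using BetaConv.rfl
  | _ :: _, _, _, [], _, _, _, _, _ => by simpa using BetaConv.rfl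
  | _ :: _, [], _, _ :: _, hlen, _, _, _, _ => by simp at hlen
  | u :: us, P :: Ps, H, a :: as, hlen, hnd, hPs, hH, has => by
      simp only [List.nodup_cons] at hnd
      have hP : fv P = ∅ := hPs P (by simp)
      have hstep : Beta
          (appList (lamList (u :: us) (appList H (zipAppVar (P :: Ps) (u :: us)))) (a :: as))
          (appList (lamList us (appList (app H (app P a)) (zipAppVar Ps us))) as) := by
        refine Beta.appList_left as ?_
        have := Beta.beta u (lamList us (appList (app H (app P (var u))) (zipAppVar Ps us))) a
        rwa [subst_lamList hnd.1, subst_appList,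
          subst_zipAppVar hnd.1 (fun Q hQ => hPs Q (by simp [hQ])), subst, subst,
          subst_eq_self a (hH u (by simp)), subst_eq_self a (by simp [hP]), subst_var_same] at this
      have ih := betaConv_appList_lamList us Ps (app H (app P a)) as (by simpa using hlen) hnd.2
        (fun Q hQ => hPs Q (by simp [hQ]))
        (fun v hv => by
          simp only [fv, hP, Finset.empty_union, Finset.mem_union, not_or]
          exact ⟨hH v (by simp [hv]), has v (by simp [hv]) a (by simp)⟩)
        (fun v hv b hb => has v (by simp [hv]) b (by simp [hb]))
      simpa using hstep.betaConv.trans ih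

/-! ## Composition of β-normal FHIs -/

lemma exists_of_mem_zipWith {α β γ : Type*} {f : α → β → γ} :
    ∀ {l₁ : List α} {l₂ : List β} {c : γ}, c ∈ List.zipWith f l₁ l₂ →
      ∃ a ∈ l₁, ∃ b ∈ l₂, c = f a b
  | [], _, _, h | _ :: _, [], _, h => by simp at h
  | a :: l₁, b :: l₂, c, h => by
      rcases List.mem_cons.mp h with rfl | h
      · exact ⟨a, by simp, b, by simp, rfl⟩
      · obtain ⟨a', ha', b', hb', rfl⟩ := exists_of_mem_zipWith h
        exact ⟨a', by simp [ha'], b', by simp [hb'], rfl⟩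

/-- The argument list of the composite of two β-normal FHIs of arities `|us|` and `|vs|`. -/
lemma zipAppVar_composite {Rs Ps Qs : List Term} {us vs : List ℕ} (hP : Ps.length = us.length)
    (hQ : Qs.length = vs.length) (hR : Rs.length = min us.length vs.length) :
    zipAppVar Rs vs ++ zipAppVar (Ps.drop vs.length) (us.drop vs.length)
        ++ (zipAppVar Qs vs).drop us.length
      = zipAppVar (Rs ++ Ps.drop vs.length ++ Qs.drop us.length) (vs ++ us.drop vs.length) := by
  rcases le_or_gt vs.length us.length with h | h
  · have hQnil : Qs.drop us.length = [] := List.drop_eq_nil_of_le (by omega)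
    have hzQnil : (zipAppVar Qs vs).drop us.length = [] := List.drop_eq_nil_of_le (by simp; omega)
    rw [hQnil, hzQnil, List.append_nil, List.append_nil, zipAppVar_append (by omega)]
  · have hPnil : Ps.drop vs.length = [] := List.drop_eq_nil_of_le (by omega)
    have husnil : us.drop vs.length = [] := List.drop_eq_nil_of_le (by omega)
    rw [hPnil, husnil, List.append_nil, List.append_nil, zipAppVar_nil_left, List.append_nil,
      zipAppVar_append_left, drop_zipAppVar, hR, min_eq_left h.le]

def compTerm (x : ℕ) (M N : Term) : Term := lam x (app N (app M (var x)))

lemma beta_compTerm_app {x : ℕ} {M N : Term} (hM : fv M = ∅) (hN : fv N = ∅) (A : Term) :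
    Beta (app (compTerm x M N) A) (app N (app M A)) := by
  simpa [compTerm, subst, subst_eq_self A (by simp [hM] : x ∉ fv M),
    subst_eq_self A (by simp [hN] : x ∉ fv N)] using Beta.beta x (app N (app M (var x))) A

lemma forall₂_betaConv_zipAppVar_zipWith {x : ℕ} {f : Term → Term → Term} :
    ∀ {Ps Qs : List Term} (vs : List ℕ), (∀ P ∈ Ps, fv P = ∅) → (∀ Q ∈ Qs, fv Q = ∅) →
      (∀ P ∈ Ps, ∀ Q ∈ Qs, BetaConv (compTerm x Q P) (f P Q)) →
      List.Forall₂ BetaConv (List.zipWith app Ps (zipAppVar Qs vs))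
        (zipAppVar (List.zipWith f Ps Qs) vs)
  | [], _, _, _, _, _ | _ :: _, [], _, _, _, _ | _ :: _, _ :: _, [], _, _, _ => by simp
  | P :: Ps, Q :: Qs, v :: vs, hPs, hQs, h => by
      refine List.Forall₂.cons ?_ (forall₂_betaConv_zipAppVar_zipWith vs
        (fun P' hP' => hPs P' (by simp [hP'])) (fun Q' hQ' => hQs Q' (by simp [hQ']))
        (fun P' hP' Q' hQ' => h P' (by simp [hP']) Q' (by simp [hQ'])))
      exact (beta_compTerm_app (hQs Q (by simp)) (hPs P (by simp)) _).betaConv.symm.trans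
        (.app (h P (by simp) Q (by simp)) .rfl)

lemma exists_forall₂_zipAppVar {x : ℕ} {p : Term → Prop} {Ps Qs : List Term} (vs : List ℕ)
    (hPs : ∀ P ∈ Ps, fv P = ∅) (hQs : ∀ Q ∈ Qs, fv Q = ∅)
    (h : ∀ P ∈ Ps, ∀ Q ∈ Qs, ∃ R, p R ∧ BetaConv (compTerm x Q P) R) :
    ∃ Rs, Rs.length = min Ps.length Qs.length ∧ (∀ R ∈ Rs, p R) ∧
      List.Forall₂ BetaConv (List.zipWith app Ps (zipAppVar Qs vs)) (zipAppVar Rs vs) := by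
  choose! f hp hconv using h
  refine ⟨List.zipWith f Ps Qs, by simp, fun R hR => ?_,
    forall₂_betaConv_zipAppVar_zipWith vs hPs hQs hconv⟩
  obtain ⟨P, hP, Q, hQ, rfl⟩ := exists_of_mem_zipWith hR
  exact hp P hP Q hQ

def HasFHIComposite (N₁ N₂ : Term) : Prop :=
  ∀ x, Disjoint (allVars N₁) (allVars N₂) → x ∉ allVars N₁ → x ∉ allVars N₂ →
    ∃ R, FHInf R ∧ BetaConv (compTerm x N₁ N₂) R ∧
      allVars R ⊆ insert x (allVars N₁ ∪ allVars N₂)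

/-- Reduce `N₁ x`, then `N₂ (…)`; the arguments `Qᵢ vᵢ` are absorbed by the `Pᵢ`, and the
pairs `Pᵢ (Qᵢ vᵢ)` are finally replaced by `Rᵢ vᵢ`. -/
lemma betaConv_compTerm_fhiTerm {x u v : ℕ} {us vs : List ℕ} {Ps Qs Rs : List Term}
    (hlen₁ : Ps.length = us.length) (hu : u ∉ us) (hnd₁ : us.Nodup) (hPs : ∀ P ∈ Ps, fv P = ∅)
    (hlen₂ : Qs.length = vs.length) (hv : v ∉ vs) (hQs : ∀ Q ∈ Qs, fv Q = ∅)
    (hx : x ∉ us) (hdisj : ∀ w ∈ us, w ∉ vs) (hRlen : Rs.length = min us.length vs.length)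
    (hRs : List.Forall₂ BetaConv (List.zipWith app Ps (zipAppVar Qs vs)) (zipAppVar Rs vs)) :
    BetaConv (compTerm x (fhiTerm u us Ps) (fhiTerm v vs Qs))
      (fhiTerm x (vs ++ us.drop vs.length) (Rs ++ Ps.drop vs.length ++ Qs.drop us.length)) := by
  have hred := betaConv_appList_lamList us Ps (var x) (zipAppVar Qs vs) hlen₁ hnd₁ hPs
    (fun w hw h => hx (by simp only [fv, Finset.mem_singleton] at h; exact h ▸ hw))
    (fun w hw a ha h => by
      obtain ⟨Q, hQ, y, hy, rfl⟩ := mem_zipAppVar ha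
      simp only [fv, hQs Q hQ, Finset.empty_union, Finset.mem_singleton] at h
      exact hdisj w hw (h ▸ hy))
  simp only [length_zipAppVar, hlen₂, min_self] at hred
  rw [fhiTerm.eq_1 x, lamList_append, ← zipAppVar_composite hlen₁ hlen₂ hRlen]
  exact .lam x <| (BetaConv.app .rfl (beta_fhiTerm_app hu hPs (var x)).betaConv).trans <|
    (beta_fhiTerm_app hv hQs _).betaConv.trans <| .lamList vs <| hred.trans <|
      .lamList _ <| .appList .rfl <| List.rel_append
        (List.rel_append hRs (List.forall₂_same.mpr fun _ _ => .rfl))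
        (List.forall₂_same.mpr fun _ _ => .rfl)

lemma fhInf_fhiTerm_composite {x : ℕ} {us vs : List ℕ} {Ps Qs Rs : List Term}
    (hlen₁ : Ps.length = us.length) (hnd₁ : us.Nodup) (hPs : ∀ P ∈ Ps, FHInf P)
    (hlen₂ : Qs.length = vs.length) (hnd₂ : vs.Nodup) (hQs : ∀ Q ∈ Qs, FHInf Q)
    (hRlen : Rs.length = min us.length vs.length) (hRs : ∀ R ∈ Rs, FHInf R)
    (hxus : x ∉ us) (hxvs : x ∉ vs) (hapart : ∀ w ∈ us, w ∉ vs) :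
    FHInf (fhiTerm x (vs ++ us.drop vs.length) (Rs ++ Ps.drop vs.length ++ Qs.drop us.length)) := by
  refine FHInf.mk_fhiTerm (by simp [hRlen, hlen₁, hlen₂]; omega) ?_ ?_ ?_
  · simp only [List.mem_append, not_or]
    exact ⟨hxvs, fun h => hxus (List.mem_of_mem_drop h)⟩
  · exact hnd₂.append (hnd₁.sublist (List.drop_sublist _ _)) fun a ha ha' =>
      hapart a (List.mem_of_mem_drop ha') ha
  · simp only [List.mem_append]
    rintro R ((hR | hR) | hR)
    exacts [hRs R hR, hPs R (List.mem_of_mem_drop hR), hQs R (List.mem_of_mem_drop hR)]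

lemma hasFHIComposite_fhiTerm {u v : ℕ} {us vs : List ℕ} {Ps Qs : List Term}
    (hlen₁ : Ps.length = us.length) (hu : u ∉ us) (hnd₁ : us.Nodup) (hPs : ∀ P ∈ Ps, FHInf P)
    (hlen₂ : Qs.length = vs.length) (hv : v ∉ vs) (hnd₂ : vs.Nodup) (hQs : ∀ Q ∈ Qs, FHInf Q)
    (hQP : ∀ P ∈ Ps, ∀ Q ∈ Qs, HasFHIComposite Q P) :
    HasFHIComposite (fhiTerm u us Ps) (fhiTerm v vs Qs) := by
  intro x hdisj hx₁ hx₂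
  set S := insert x (allVars (fhiTerm u us Ps) ∪ allVars (fhiTerm v vs Qs))
  have hus : ∀ w ∈ us, w ∈ allVars (fhiTerm u us Ps) := fun _ => mem_allVars_fhiTerm_of_mem
  have hvs : ∀ w ∈ vs, w ∈ allVars (fhiTerm v vs Qs) := fun _ => mem_allVars_fhiTerm_of_mem
  have hPS : ∀ P ∈ Ps, allVars P ⊆ allVars (fhiTerm u us Ps) := fun _ =>
    allVars_subset_allVars_fhiTerm hlen₁
  have hQS : ∀ Q ∈ Qs, allVars Q ⊆ allVars (fhiTerm v vs Qs) := fun _ =>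
    allVars_subset_allVars_fhiTerm hlen₂
  have hapart : ∀ w ∈ us, w ∉ vs := fun w hw hw' =>
    Finset.disjoint_left.mp hdisj (hus w hw) (hvs w hw')
  have hPc : ∀ P ∈ Ps, fv P = ∅ := fun P hP => (hPs P hP).fv_eq_empty
  have hQc : ∀ Q ∈ Qs, fv Q = ∅ := fun Q hQ => (hQs Q hQ).fv_eq_empty
  obtain ⟨Rs, hRlen, hRs, hconv⟩ :=
    exists_forall₂_zipAppVar (p := fun R => FHInf R ∧ allVars R ⊆ S) vs hPc hQc
      fun P hP Q hQ => by
        obtain ⟨R, hR, hRconv, hsub⟩ := hQP P hP Q hQ x ((hdisj.mono (hPS P hP) (hQS Q hQ)).symm)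
          (fun h => hx₂ (hQS Q hQ h)) (fun h => hx₁ (hPS P hP h))
        refine ⟨R, ⟨hR, hsub.trans (Finset.insert_subset_insert _ ?_)⟩, hRconv⟩
        exact Finset.union_subset ((hQS Q hQ).trans Finset.subset_union_right)
          ((hPS P hP).trans Finset.subset_union_left)
  rw [hlen₁, hlen₂] at hRlen
  refine ⟨_, fhInf_fhiTerm_composite hlen₁ hnd₁ hPs hlen₂ hnd₂ hQs hRlen (fun R hR => (hRs R hR).1)
      (fun h => hx₁ (hus x h)) (fun h => hx₂ (hvs x h)) hapart,
    betaConv_compTerm_fhiTerm hlen₁ hu hnd₁ hPc hlen₂ hv hQc (fun h => hx₁ (hus x h)) hapart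
      hRlen hconv,
    allVars_fhiTerm_subset (by simp [hRlen, hlen₁, hlen₂]; omega) (Finset.mem_insert_self _ _)
      ?_ ?_⟩
  · simp only [List.mem_append]
    rintro a (ha | ha)
    · exact Finset.mem_insert_of_mem (Finset.mem_union_right _ (hvs a ha))
    · exact Finset.mem_insert_of_mem (Finset.mem_union_left _ (hus a (List.mem_of_mem_drop ha)))
  · simp only [List.mem_append]
    rintro R ((hR | hR) | hR)
    · exact (hRs R hR).2
    · exact (hPS R (List.mem_of_mem_drop hR)).trans
        (Finset.subset_union_left.trans (Finset.subset_insert _ _))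
    · exact (hQS R (List.mem_of_mem_drop hR)).trans
        (Finset.subset_union_right.trans (Finset.subset_insert _ _))

/-- Both orders are proved together, because the argument pairs are composed with a child of
`N₂` first and a child of `N₁` second. -/
lemma FHInf.hasFHIComposite {N₁ N₂ : Term} (h₁ : FHInf N₁) (h₂ : FHInf N₂) :
    HasFHIComposite N₁ N₂ := by
  suffices ∀ N₂, FHInf N₂ → HasFHIComposite N₁ N₂ ∧ HasFHIComposite N₂ N₁ from (this N₂ h₂).1
  refine FHInf.induction_fhiTerm (fun u us Ps hlen₁ hu hnd₁ hPs ih N₂ h₂ => ?_) h₁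
  obtain ⟨v, vs, Qs, hlen₂, hv, hnd₂, hQs, rfl⟩ := h₂.exists_eq_fhiTerm
  exact ⟨hasFHIComposite_fhiTerm hlen₁ hu hnd₁ hPs hlen₂ hv hnd₂ hQs
      fun P hP Q hQ => (ih P hP Q (hQs Q hQ)).2,
    hasFHIComposite_fhiTerm hlen₂ hv hnd₂ hQs hlen₁ hu hnd₁ hPs
      fun Q hQ P hP => (ih P hP Q (hQs Q hQ)).1⟩

/-! ## Typing -/

lemma envDisj_nil (Γ : Env) : EnvDisj [] Γ := by
  simp [EnvDisj, Env.dom]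

@[simp] lemma Env.mem_dom_singleton {x y : ℕ} {σ : Ty} : y ∈ Env.dom [(x, σ)] ↔ y = x := by
  simp [Env.dom]

namespace Deriv

variable {Γ : Env} {M N : Term} {σ τ ρ : Ty}

lemma toOmega (h : Deriv Γ M σ) : Deriv Γ M Ty.omega :=
  andE₂ (h.eqv (SemEq.andOmegaR σ))

lemma app_closed (h₁ : Deriv [] M (Ty.arr σ τ)) (h₂ : Deriv Γ N σ) : Deriv Γ (app M N) τ :=
  arrE h₁ h₂ (envDisj_nil Γ)

lemma app_cons {y : ℕ} (h₁ : Deriv Γ M (Ty.arr σ τ)) (h₂ : Deriv [(y, ρ)] N σ)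
    (hy : y ∉ Γ.dom) : Deriv ((y, ρ) :: Γ) (app M N) τ :=
  (arrE h₁ h₂ fun _ ha hy' => hy (Env.mem_dom_singleton.mp hy' ▸ ha)).perm
    (List.perm_append_singleton _ _)

lemma orE_var {x : ℕ} (h₁ : Deriv ((x, Ty.and σ Ty.omega) :: Γ) M ρ)
    (h₂ : Deriv ((x, Ty.and τ Ty.omega) :: Γ) M ρ) (hx : x ∉ Γ.dom) :
    Deriv ((x, Ty.or σ τ) :: Γ) M ρ := by
  have := orE h₁ h₂ ((ax x (Ty.or σ τ)).eqv (SemEq.andOmegaR _))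
    fun _ ha hx' => hx (Env.mem_dom_singleton.mp hx' ▸ ha)
  rw [subst_var_self] at this
  exact this.perm (List.perm_append_singleton _ _)

lemma compTerm {x : ℕ} (h₁ : Deriv [] M (Ty.arr σ τ)) (h₂ : Deriv [] N (Ty.arr τ ρ)) :
    Deriv [] (compTerm x M N) (Ty.arr σ ρ) :=
  arrI (h₂.app_closed (h₁.app_closed (ax x σ)))

end Deriv

/-- The coercions realised by the identity `λz. z`. -/
def DerivLe (σ τ : Ty) : Prop := ∀ ⦃Γ M⦄, Deriv Γ M σ → Deriv Γ M τ

namespace DerivLe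

variable {σ τ ρ ζ : Ty}

lemma refl : DerivLe σ σ := fun _ _ h => h

lemma trans (h₁ : DerivLe σ τ) (h₂ : DerivLe τ ρ) : DerivLe σ ρ := fun _ _ h => h₂ (h₁ h)

lemma of_semEq (h : SemEq σ τ) : DerivLe σ τ := fun _ _ hd => hd.eqv h

lemma omega : DerivLe σ Ty.omega := fun _ _ h => h.toOmega

lemma andE₁ : DerivLe (Ty.and σ τ) σ := fun _ _ h => h.andE₁

lemma andE₂ : DerivLe (Ty.and σ τ) τ := fun _ _ h => h.andE₂

lemma andI (h₁ : DerivLe σ τ) (h₂ : DerivLe σ ρ) : DerivLe σ (Ty.and τ ρ) :=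
  fun _ _ h => (h₁ h).andI (h₂ h)

lemma orI₁ : DerivLe σ (Ty.or σ τ) := fun _ _ h => h.orI₁

lemma orI₂ : DerivLe τ (Ty.or σ τ) := fun _ _ h => h.orI₂

lemma orE_and (h₁ : DerivLe (Ty.and σ ζ) ρ) (h₂ : DerivLe (Ty.and τ ζ) ρ) :
    DerivLe (Ty.and (Ty.or σ τ) ζ) ρ := fun Γ N hN => by
  simpa using Deriv.orE (x := 0) (h₁ (Deriv.ax 0 _)) (h₂ (Deriv.ax 0 _)) hN (envDisj_nil Γ)

lemma orE (h₁ : DerivLe σ ρ) (h₂ : DerivLe τ ρ) : DerivLe (Ty.or σ τ) ρ :=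
  (of_semEq (SemEq.andOmegaR _)).trans (orE_and (andE₁.trans h₁) (andE₁.trans h₂))

lemma and_comm : DerivLe (Ty.and σ τ) (Ty.and τ σ) := andI andE₂ andE₁

lemma and_or_right_mp : DerivLe (Ty.or (Ty.and σ τ) ρ) (Ty.and (Ty.or σ ρ) (Ty.or τ ρ)) :=
  orE (andI (andE₁.trans orI₁) (andE₂.trans orI₁)) (andI orI₂ orI₂)

lemma and_or_right_mpr : DerivLe (Ty.and (Ty.or σ ρ) (Ty.or τ ρ)) (Ty.or (Ty.and σ τ) ρ) :=
  orE_and (and_comm.trans (orE_and (and_comm.trans orI₁) (andE₁.trans orI₂)))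
    (andE₁.trans orI₂)

lemma or_and_right_mp : DerivLe (Ty.and (Ty.or σ τ) ρ) (Ty.or (Ty.and σ ρ) (Ty.and τ ρ)) :=
  orE_and orI₁ orI₂

lemma or_and_right_mpr : DerivLe (Ty.or (Ty.and σ ρ) (Ty.and τ ρ)) (Ty.and (Ty.or σ τ) ρ) :=
  orE (andI (andE₁.trans orI₁) andE₂) (andI (andE₁.trans orI₂) andE₂)

end DerivLe

def IsUnivId (t : Term) : Prop := ∀ ρ : Ty, Deriv [] t (Ty.arr ρ ρ)

/-- Induction on `ys`, then on the type; at a union type the head `H` is abstracted to a fresh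
variable, which the cut rule `orE` substitutes back. -/
lemma deriv_lamList_appList_zipAppVar (K : Term → Term)
    (hK : ∀ {Γ H τ}, Deriv Γ H τ → Deriv Γ (K H) τ)
    (hKsubst : ∀ t z N, (K t).subst z N = K (t.subst z N)) :
    ∀ (ys : List ℕ) (Ps : List Term), Ps.length = ys.length → ys.Nodup →
      (∀ P ∈ Ps, IsUnivId P ∧ fv P = ∅) → ∀ {τ : Ty} {Γ : Env} {H : Term},
      (∀ y ∈ ys, y ∉ Γ.dom) → Deriv Γ H τ →
      Deriv Γ (lamList ys (K (appList H (zipAppVar Ps ys)))) τ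
  | [], Ps, hlen, _, _, _, _, _, _, hH => by
      rw [List.length_eq_zero_iff.mp hlen]
      exact hK hH
  | _ :: _, [], hlen, _, _, _, _, _, _, _ => by simp at hlen
  | y :: ys, P :: Ps, hlen, hnd, hPs, τ, Γ, H, hfresh, hH => by
      simp only [List.nodup_cons] at hnd
      have harr : ∀ {Γ H α β}, (∀ w ∈ y :: ys, w ∉ Env.dom Γ) → Deriv Γ H (Ty.arr α β) →
          Deriv Γ (lamList (y :: ys) (K (appList H (zipAppVar (P :: Ps) (y :: ys)))))
            (Ty.arr α β) := by
        intro Γ H α β hfr hH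
        refine Deriv.arrI (deriv_lamList_appList_zipAppVar K hK hKsubst ys Ps
          (by simpa using hlen) hnd.2 (fun Q hQ => hPs Q (by simp [hQ])) (fun w hw => ?_)
          (hH.app_cons (((hPs P (by simp)).1 α).app_closed (Deriv.ax y α)) (hfr y (by simp))))
        simp only [Env.dom, List.map_cons, List.mem_cons, not_or]
        exact ⟨fun h => hnd.1 (h ▸ hw), hfr w (by simp [hw])⟩
      induction τ generalizing Γ H with
      | atom a =>
          exact (harr hfresh (hH.eqv (SemEq.atomFun a))).eqv (SemEq.atomFun a).symm
      | omega => exact (harr hfresh (hH.eqv SemEq.omegaFun)).eqv SemEq.omegaFun.symm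
      | arr => exact harr hfresh hH
      | and τ₁ τ₂ ih₁ ih₂ => exact (ih₁ _ _ hfresh hH.andE₁).andI (ih₂ _ _ hfresh hH.andE₂)
      | or τ₁ τ₂ ih₁ ih₂ =>
          set z := freshVar (y :: ys).toFinset
          have hz : z ∉ y :: ys := fun h => freshVar_notMem _ (List.mem_toFinset.mpr h)
          have hzfresh : ∀ τ', ∀ w ∈ y :: ys, w ∉ Env.dom [(z, Ty.and τ' Ty.omega)] :=
            fun _ w hw h => hz (Env.mem_dom_singleton.mp h ▸ hw)
          have := Deriv.orE (Γ₁ := [])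
            (ih₁ _ _ (hzfresh τ₁) (Deriv.ax z _).andE₁).orI₁
            (ih₂ _ _ (hzfresh τ₂) (Deriv.ax z _).andE₁).orI₂
            (hH.eqv (SemEq.andOmegaR _)) (envDisj_nil Γ)
          rwa [subst_lamList hz, hKsubst, subst_appList, subst_var_same,
            subst_zipAppVar hz fun Q hQ => (hPs Q hQ).2] at this

lemma FHInf.isUnivId {t : Term} (h : FHInf t) : IsUnivId t :=
  FHInf.induction_fhiTerm (fun x ys Ps hlen hx hnd hPs ih ρ =>
    Deriv.arrI (deriv_lamList_appList_zipAppVar id id (fun _ _ _ => rfl) ys Ps hlen hnd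
      (fun P hP => ⟨ih P hP, (hPs P hP).fv_eq_empty⟩)
      (fun _ hy h => hx (Env.mem_dom_singleton.mp h ▸ hy)) (Deriv.ax x ρ))) h

/-! ## Realisable witnesses -/

def idT (z : ℕ) : Term := lam z (var z)

def arrowTerm (x y : ℕ) (W P : Term) : Term := lam x (lam y (app W (app (var x) (app P (var y)))))

lemma Deriv.arrowBody {x y : ℕ} {W P : Term} {α σ τ σ' τ' : Ty} (hxy : x ≠ y)
    (hx : Deriv [(x, α)] (var x) (Ty.arr σ τ)) (hW : Deriv [] W (Ty.arr τ τ'))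
    (hP : Deriv [] P (Ty.arr σ' σ)) :
    Deriv [(y, σ'), (x, α)] (app W (app (var x) (app P (var y)))) τ' :=
  hW.app_closed (hx.app_cons (hP.app_closed (Deriv.ax y σ')) (by simpa using hxy.symm))

structure FHIRep (C N : Term) (V : Finset ℕ) : Prop where
  betaConv : BetaConv C N
  fhinf : FHInf N
  closed : fv C = ∅
  disjoint : Disjoint (allVars N) V
  isUnivId : IsUnivId C

lemma IsUnivId.arrowTerm {x y : ℕ} {W P : Term} (hxy : x ≠ y) (hW : IsUnivId W)
    (hWc : fv W = ∅) (hP : IsUnivId P) (hPc : fv P = ∅) : IsUnivId (arrowTerm x y W P) :=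
  fun ρ => Deriv.arrI (deriv_lamList_appList_zipAppVar (app W) (fun hH => (hW _).app_closed hH)
    (fun t z N => by simp [subst, subst_eq_self N (by simp [hWc] : z ∉ fv W)])
    [y] [P] rfl (by simp) (by simpa using ⟨hP, hPc⟩) (by simpa using hxy.symm) (Deriv.ax x ρ))

lemma FHIRep.compTerm {x : ℕ} {C₁ C₂ N₁ N₂ : Term} {V : Finset ℕ} (hx : x ∉ V)
    (h₁ : FHIRep C₁ N₁ (insert x V ∪ allVars N₂)) (h₂ : FHIRep C₂ N₂ (insert x V)) :
    ∃ R, FHIRep (compTerm x C₁ C₂) R V := by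
  have d₁ := h₁.disjoint
  have d₂ := h₂.disjoint
  rw [Finset.disjoint_union_right, Finset.disjoint_insert_right] at d₁
  rw [Finset.disjoint_insert_right] at d₂
  obtain ⟨R, hR, hconv, hsub⟩ := h₁.fhinf.hasFHIComposite h₂.fhinf x d₁.2 d₁.1.1 d₂.1
  refine ⟨R, (BetaConv.lam x (.app h₂.betaConv (.app h₁.betaConv .rfl))).trans hconv, hR,
    by simp [TypeIso.compTerm, fv, h₁.closed, h₂.closed], ?_,
    fun ρ => Deriv.compTerm (h₁.isUnivId ρ) (h₂.isUnivId ρ)⟩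
  refine Finset.disjoint_of_subset_left hsub ?_
  simp [Finset.disjoint_insert_left, hx, d₁.1.2, d₂.2]

lemma FHIRep.arrowTerm {x y : ℕ} {W P NW NP : Term} {V : Finset ℕ} (hxy : x ≠ y) (hx : x ∉ V)
    (hy : y ∉ V) (hW : FHIRep W NW (insert y (insert x V)))
    (hP : FHIRep P NP (insert y (insert x V))) : ∃ N, FHIRep (arrowTerm x y W P) N V := by
  obtain ⟨u, vs, Qs, hlen, hu, hnd, hQs, rfl⟩ := hW.fhinf.exists_eq_fhiTerm
  have dW := hW.disjoint
  have dP := hP.disjoint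
  simp only [Finset.disjoint_insert_right] at dW dP
  have hvs : ∀ w ∈ vs, w ∈ allVars (fhiTerm u vs Qs) := fun _ => mem_allVars_fhiTerm_of_mem
  refine ⟨fhiTerm x (y :: vs) (NP :: Qs), ⟨?_, ?_, ?_, ?_,
    hW.isUnivId.arrowTerm hxy hW.closed hP.isUnivId hP.closed⟩⟩
  · exact (BetaConv.lam x (.lam y (.app hW.betaConv (.app .rfl (.app hP.betaConv .rfl))))).trans
      (.lam x (.lam y (beta_fhiTerm_app hu (fun Q hQ => (hQs Q hQ).fv_eq_empty) _).betaConv))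
  · refine FHInf.mk_fhiTerm (by simp [hlen]) ?_
      (List.nodup_cons.mpr ⟨fun h => dW.1 (hvs y h), hnd⟩) ?_
    · simp only [List.mem_cons, not_or]
      exact ⟨hxy, fun h => dW.2.1 (hvs x h)⟩
    · simp only [List.mem_cons]
      rintro Q (rfl | hQ)
      exacts [hP.fhinf, hQs Q hQ]
  · ext a
    simp [TypeIso.arrowTerm, fv, hW.closed, hP.closed]
    tauto
  · refine Finset.disjoint_of_subset_left
      (u := insert x (insert y (allVars (fhiTerm u vs Qs) ∪ allVars NP)))
      (allVars_fhiTerm_subset (by simp [hlen]) (by simp) ?_ ?_) ?_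
    · simp only [List.mem_cons]
      rintro w (rfl | hw)
      · simp
      · simp [hvs w hw]
    · simp only [List.mem_cons]
      rintro Q (rfl | hQ) a ha
      · simp [ha]
      · simp [allVars_subset_allVars_fhiTerm hlen hQ ha]
    · simp [Finset.disjoint_insert_left, hx, hy, dW.2.2, dP.2.2]

/-- Substitution is not capture-avoiding, so witnesses are kept with normal forms avoiding any
prescribed variables: this is what lets composites be normalised. -/
def Realizable (p : Term → Prop) : Prop := ∀ V : Finset ℕ, ∃ C N, FHIRep C N V ∧ p C

namespace Realizable

variable {p q r : Term → Prop}

lemma mono (h : Realizable p) (hpq : ∀ C, p C → q C) : Realizable q := fun V =>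
  let ⟨C, N, hC, hp⟩ := h V
  ⟨C, N, hC, hpq C hp⟩

lemma of_idT (h : ∀ z, p (idT z)) : Realizable p := fun V =>
  ⟨idT (freshVar V), idT (freshVar V),
    ⟨.rfl, FHInf.mk_fhiTerm (x := freshVar V) (ys := []) (Ps := []) rfl (by simp) (by simp)
      (by simp), by simp [idT, fv], by simpa [idT, allVars] using freshVar_notMem V,
      fun ρ => Deriv.arrI (Deriv.ax _ ρ)⟩, h _⟩

lemma comp (h₁ : Realizable p) (h₂ : Realizable q)
    (h : ∀ x C₁ C₂, IsUnivId C₁ → IsUnivId C₂ → p C₁ → q C₂ → r (compTerm x C₁ C₂)) :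
    Realizable r := fun V => by
  obtain ⟨C₂, N₂, hC₂, hq⟩ := h₂ (insert (freshVar V) V)
  obtain ⟨C₁, N₁, hC₁, hp⟩ := h₁ (insert (freshVar V) V ∪ allVars N₂)
  obtain ⟨R, hR⟩ := FHIRep.compTerm (freshVar_notMem V) hC₁ hC₂
  exact ⟨_, R, hR, h _ C₁ C₂ hC₁.isUnivId hC₂.isUnivId hp hq⟩

lemma arrow (hW : Realizable p) (hP : Realizable q)
    (h : ∀ x y W P, x ≠ y → IsUnivId W → IsUnivId P → p W → q P → r (arrowTerm x y W P)) :
    Realizable r := fun V => by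
  set x := freshVar V
  set y := freshVar (insert x V)
  have hy : y ∉ insert x V := freshVar_notMem _
  rw [Finset.mem_insert, not_or] at hy
  obtain ⟨W, NW, hWr, hp⟩ := hW (insert y (insert x V))
  obtain ⟨P, NP, hPr, hq⟩ := hP (insert y (insert x V))
  obtain ⟨N, hN⟩ := FHIRep.arrowTerm (Ne.symm hy.1) (freshVar_notMem V) hy.2 hWr hPr
  exact ⟨_, N, hN, h x y W P (Ne.symm hy.1) hWr.isUnivId hPr.isUnivId hp hq⟩

end Realizable

/-! ## Realising the normalisation rules -/

def IsIdCoercion (C : Term) : Prop := ∀ σ τ, DerivLe σ τ → Deriv [] C (Ty.arr σ τ)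

lemma realizable_isIdCoercion : Realizable IsIdCoercion :=
  Realizable.of_idT fun z _ _ h => Deriv.arrI (h (Deriv.ax z _))

def CoeRealizable (σ τ : Ty) : Prop := Realizable fun C => Deriv [] C (Ty.arr σ τ)

def IsoRealizable (σ τ : Ty) : Prop :=
  Realizable fun C => Deriv [] C (Ty.arr σ τ) ∧ Deriv [] C (Ty.arr τ σ)

lemma CoeRealizable.of_derivLe {σ τ : Ty} (h : DerivLe σ τ) : CoeRealizable σ τ :=
  realizable_isIdCoercion.mono fun _ hC => hC σ τ h

lemma CoeRealizable.of_normLe {σ τ : Ty} (h : NormLe σ τ) : CoeRealizable σ τ := by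
  induction h with
  | refl => exact .of_derivLe .refl
  | trans _ _ ih₁ ih₂ => exact ih₁.comp ih₂ fun _ _ _ _ _ h₁ h₂ => h₁.compTerm h₂
  | leOmega => exact .of_derivLe .omega
  | andE₁ => exact .of_derivLe .andE₁
  | andE₂ => exact .of_derivLe .andE₂
  | orI₁ => exact .of_derivLe .orI₁
  | orI₂ => exact .of_derivLe .orI₂
  | @andI σ _ _ _ _ ih₁ ih₂ =>
      exact ih₁.comp ih₂ fun x _ _ hu₁ hu₂ h₁ h₂ => Deriv.arrI <| Deriv.andI
        ((hu₂ _).app_closed (h₁.app_closed (Deriv.ax x σ)))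
        (h₂.app_closed ((hu₁ σ).app_closed (Deriv.ax x σ)))
  | @orE _ τ _ _ _ ih₁ ih₂ =>
      exact ih₁.comp ih₂ fun x _ _ hu₁ hu₂ h₁ h₂ => Deriv.arrI <| Deriv.orE_var
        ((hu₂ τ).app_closed (h₁.app_closed (Deriv.ax x _).andE₁))
        (h₂.app_closed ((hu₁ _).app_closed (Deriv.ax x _).andE₁)) (by simp [Env.dom])
  | atomArr a =>
      exact realizable_isIdCoercion.arrow realizable_isIdCoercion fun x _ _ _ hxy _ _ hW hP =>
        Deriv.arrI <| Deriv.arrI <| Deriv.arrowBody hxy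
          ((Deriv.ax x _).eqv (SemEq.atomFun a)) (hW _ _ .refl) (hP _ _ .omega)
  | omegaArr =>
      exact realizable_isIdCoercion.arrow realizable_isIdCoercion fun x _ _ _ hxy _ _ hW hP =>
        Deriv.arrI <| Deriv.arrI <| Deriv.arrowBody hxy
          ((Deriv.ax x _).eqv SemEq.omegaFun) (hW _ _ .refl) (hP _ _ .omega)
  | arr _ _ ih₁ ih₂ =>
      exact ih₂.arrow ih₁ fun x _ _ _ hxy _ _ hW hP =>
        Deriv.arrI <| Deriv.arrI <| Deriv.arrowBody hxy (Deriv.ax x _) hW hP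

namespace IsoRealizable

variable {σ τ ρ σ' τ' : Ty}

lemma of_derivLe (h₁ : DerivLe σ τ) (h₂ : DerivLe τ σ) : IsoRealizable σ τ :=
  realizable_isIdCoercion.mono fun _ hC => ⟨hC σ τ h₁, hC τ σ h₂⟩

lemma refl (σ : Ty) : IsoRealizable σ σ := of_derivLe .refl .refl

lemma symm (h : IsoRealizable σ τ) : IsoRealizable τ σ := h.mono fun _ hC => hC.symm

/-- The witness is `C₁` followed by `C₂` followed by a second copy of `C₁`; each direction
uses one copy as a universal identity. -/
lemma trans (h₁ : IsoRealizable σ τ) (h₂ : IsoRealizable τ ρ) : IsoRealizable σ ρ :=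
  (h₁.comp (r := fun E => Deriv [] E (Ty.arr σ ρ) ∧ Deriv [] E (Ty.arr ρ τ)) h₂
      fun _ _ _ hu₁ _ hC₁ hC₂ => ⟨hC₁.1.compTerm hC₂.1, (hu₁ ρ).compTerm hC₂.2⟩).comp h₁
    fun _ _ _ _ hu₃ hE hC₃ => ⟨hE.1.compTerm (hu₃ ρ), hE.2.compTerm hC₃.2⟩

lemma arr (h₁ : IsoRealizable σ σ') (h₂ : IsoRealizable τ τ') :
    IsoRealizable (Ty.arr σ τ) (Ty.arr σ' τ') :=
  h₂.arrow h₁ fun x _ _ _ hxy _ _ hW hP =>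
    ⟨Deriv.arrI (Deriv.arrI (Deriv.arrowBody hxy (Deriv.ax x _) hW.1 hP.2)),
      Deriv.arrI (Deriv.arrI (Deriv.arrowBody hxy (Deriv.ax x _) hW.2 hP.1))⟩

lemma and (h₁ : IsoRealizable σ σ') (h₂ : IsoRealizable τ τ') :
    IsoRealizable (Ty.and σ τ) (Ty.and σ' τ') := by
  refine h₁.comp h₂ fun x C₁ C₂ hu₁ hu₂ hC₁ hC₂ => ⟨?_, ?_⟩ <;> refine Deriv.arrI (Deriv.andI ?_ ?_)
  · exact (hu₂ _).app_closed (hC₁.1.app_closed (Deriv.ax x _).andE₁)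
  · exact hC₂.1.app_closed ((hu₁ _).app_closed (Deriv.ax x _).andE₂)
  · exact (hu₂ _).app_closed (hC₁.2.app_closed (Deriv.ax x _).andE₁)
  · exact hC₂.2.app_closed ((hu₁ _).app_closed (Deriv.ax x _).andE₂)

lemma or (h₁ : IsoRealizable σ σ') (h₂ : IsoRealizable τ τ') :
    IsoRealizable (Ty.or σ τ) (Ty.or σ' τ') := by
  refine h₁.comp h₂ fun x C₁ C₂ hu₁ hu₂ hC₁ hC₂ => ⟨?_, ?_⟩ <;>
    refine Deriv.arrI (Deriv.orE_var (Deriv.orI₁ ?_) (Deriv.orI₂ ?_) (by simp [Env.dom]))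
  · exact (hu₂ _).app_closed (hC₁.1.app_closed (Deriv.ax x _).andE₁)
  · exact hC₂.1.app_closed ((hu₁ _).app_closed (Deriv.ax x _).andE₁)
  · exact (hu₂ _).app_closed (hC₁.2.app_closed (Deriv.ax x _).andE₁)
  · exact hC₂.2.app_closed ((hu₁ _).app_closed (Deriv.ax x _).andE₁)

lemma of_coe (h : CoeRealizable σ τ) (h' : DerivLe τ σ) : IsoRealizable σ τ :=
  h.comp realizable_isIdCoercion fun _ _ _ hu _ hC hI =>
    ⟨hC.compTerm (hI τ τ .refl), (hu τ).compTerm (hI τ σ h')⟩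

lemma strongIso (h : IsoRealizable σ τ) : StrongIso σ τ :=
  let ⟨C, N, hC, hστ, hτσ⟩ := h ∅
  ⟨C, ⟨N, hC.betaConv, hC.fhinf⟩, hστ, hτσ⟩

lemma arr_and (σ τ ρ : Ty) :
    IsoRealizable (Ty.arr σ (Ty.and τ ρ)) (Ty.and (Ty.arr σ τ) (Ty.arr σ ρ)) :=
  realizable_isIdCoercion.arrow realizable_isIdCoercion fun x _ _ _ hxy _ _ hW hP =>
    ⟨Deriv.arrI (Deriv.andI
        (Deriv.arrI (Deriv.arrowBody hxy (Deriv.ax x _) (hW _ _ .andE₁) (hP _ _ .refl)))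
        (Deriv.arrI (Deriv.arrowBody hxy (Deriv.ax x _) (hW _ _ .andE₂) (hP _ _ .refl)))),
      Deriv.arrI (Deriv.arrI (Deriv.andI
        (Deriv.arrowBody hxy (Deriv.ax x _).andE₁ (hW _ _ .refl) (hP _ _ .refl))
        (Deriv.arrowBody hxy (Deriv.ax x _).andE₂ (hW _ _ .refl) (hP _ _ .refl))))⟩

lemma or_arr (σ τ ρ : Ty) :
    IsoRealizable (Ty.arr (Ty.or σ τ) ρ) (Ty.and (Ty.arr σ ρ) (Ty.arr τ ρ)) :=
  realizable_isIdCoercion.arrow realizable_isIdCoercion fun x _ _ _ hxy _ _ hW hP =>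
    ⟨Deriv.arrI (Deriv.andI
        (Deriv.arrI (Deriv.arrowBody hxy (Deriv.ax x _) (hW _ _ .refl) (hP _ _ .orI₁)))
        (Deriv.arrI (Deriv.arrowBody hxy (Deriv.ax x _) (hW _ _ .refl) (hP _ _ .orI₂)))),
      Deriv.arrI (Deriv.arrI (Deriv.orE_var
        (Deriv.arrowBody hxy (Deriv.ax x _).andE₁ (hW _ _ .refl) (hP _ _ .andE₁))
        (Deriv.arrowBody hxy (Deriv.ax x _).andE₂ (hW _ _ .refl) (hP _ _ .andE₁))
        (by simpa using hxy.symm)))⟩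

end IsoRealizable

open IsoRealizable

lemma isoRealizable_of_innerStep {σ τ : Ty} (h : InnerStep σ τ) : IsoRealizable σ τ := by
  cases h with
  | atomRule a => exact of_derivLe (.of_semEq (SemEq.atomFun a).symm) (.of_semEq (SemEq.atomFun a))
  | omegaRule h _ => exact (of_coe (.of_normLe h) .omega).symm
  | distArrAnd σ τ ρ => exact arr_and σ τ ρ
  | distAndArr _ _ _ ζ => exact .arr (of_derivLe .or_and_right_mp .or_and_right_mpr) (refl ζ)
  | distOrArr σ τ ρ => exact or_arr σ τ ρ
  | distArrOr σ _ _ _ => exact .arr (refl σ) (of_derivLe .and_or_right_mp .and_or_right_mpr)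
  | eraseAnd h => exact (of_coe (.of_normLe (.andI (.refl _) h)) .andE₁).symm
  | eraseOr h => exact of_coe (.of_normLe (.orE h (.refl _))) .orI₂

lemma isoRealizable_fill (C : TyCtx) {σ τ : Ty} (h : IsoRealizable σ τ) :
    IsoRealizable (C.fill σ) (C.fill τ) := by
  induction C with
  | hole => exact h
  | arrL _ ρ ih => exact ih.arr (refl ρ)
  | arrR ρ _ ih => exact (refl ρ).arr ih
  | andL _ ρ ih => exact ih.and (refl ρ)
  | andR ρ _ ih => exact (refl ρ).and ih
  | orL _ ρ ih => exact ih.or (refl ρ)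
  | orR ρ _ ih => exact (refl ρ).or ih

lemma isoRealizable_of_topStep {σ τ : Ty} (h : TopStep σ τ) : IsoRealizable σ τ := by
  induction h with
  | ctx C h => exact isoRealizable_fill C (isoRealizable_of_innerStep h)
  | dist => exact of_derivLe .and_or_right_mp .and_or_right_mpr
  | arrR σ _ ih => exact (refl σ).arr ih

lemma isoRealizable_of_reflTransGen {σ τ : Ty} (h : ReflTransGen TopStep σ τ) :
    IsoRealizable σ τ := by
  induction h with
  | refl => exact refl σ
  | tail _ h ih => exact ih.trans (isoRealizable_of_topStep h)

/-- Every type is strongly isomorphic to its normal form. -/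
theorem strongIso_nf :
    ∀ σ : Ty, StrongIso σ (nf σ) := by
  intro σ
  rw [nf]
  split_ifs with h
  · exact (isoRealizable_of_reflTransGen h.choose_spec.1).strongIso
  · exact (refl σ).strongIso

end TypeIso
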